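/- arXiv:2311.03530 — 3 statements merged into one kernel-verified Lean document; each statement's English description precedes it below -/
import Mathlib

section
/- Sybil invariance of VBE: If a player P divides her tokens among a set of new accounts, all with utility vectors identical to P's, and the rest of the system is unchanged, then the min-entropy VBE under ε-threshold ordinal clustering is unchanged. -/
/-!
Send every account `a` of the new system to its owner `f a` in the old one. The clustering
relation only sees utility vectors, and every account has its owner's, so it is pulled back
along `f`; and every owner's tokens are exactly the sum over her accounts. Hence the bloc of
an account carries as many tokens as the bloc of its owner, and since `f` is onto, the largest
bloc and the total supply, and with them the VBE, are unchanged.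
-/

open Finset
open scoped Classical

/-- Total tokens held by the voting bloc of player `i` under relation `r`. -/
noncomputable def blocTok {ι : Type*} [Fintype ι] (tokens : ι → ℝ) (r : ι → ι → Prop) (i : ι) : ℝ :=
  ∑ j ∈ Finset.univ.filter (fun j => r i j), tokens j

/-- Token holdings of the largest voting bloc. -/
noncomputable def maxBloc {ι : Type*} [Fintype ι] [Nonempty ι]
    (tokens : ι → ℝ) (r : ι → ι → Prop) : ℝ :=
  Finset.univ.sup' Finset.univ_nonempty (blocTok tokens r)

/-- Min-entropy VBE: `-log₂(largest bloc share)`. -/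
noncomputable def vbe {ι : Type*} [Fintype ι] [Nonempty ι]
    (tokens : ι → ℝ) (r : ι → ι → Prop) : ℝ :=
  - Real.logb 2 (maxBloc tokens r / ∑ i, tokens i)

/-- ε-threshold ordinal clustering relation on players, from utility vectors. -/
def toc {ι E : Type*} (ε : ℝ) (U : ι → E → ℝ) (i j : ι) : Prop :=
  ∀ e, Real.sign (U i e) = Real.sign (U j e) ∨ (|U i e| ≤ ε ∧ |U j e| ≤ ε)

section Pullback

variable {κ ι : Type*} [Fintype κ] [Fintype ι]
  {tokens' : κ → ℝ} {tokens : ι → ℝ} {f : κ → ι}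

theorem sum_eq_sum_of_fiberwise (hfib : ∀ i, ∑ a with f a = i, tokens' a = tokens i) :
    ∑ a, tokens' a = ∑ i, tokens i := by
  rw [← sum_fiberwise univ f tokens']
  exact sum_congr rfl fun i _ => hfib i

theorem blocTok_comap (hfib : ∀ i, ∑ a with f a = i, tokens' a = tokens i)
    (r : ι → ι → Prop) (a : κ) :
    blocTok tokens' (fun a b => r (f a) (f b)) a = blocTok tokens r (f a) := by
  have hpull := sum_fiberwise_eq_sum_filter univ (univ.filter (r (f a))) f tokens'
  simp only [mem_filter, mem_univ, true_and] at hpull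
  rw [blocTok, blocTok, ← hpull]
  exact sum_congr rfl fun i _ => hfib i

variable [Nonempty κ] [Nonempty ι]

theorem maxBloc_comap (hfib : ∀ i, ∑ a with f a = i, tokens' a = tokens i)
    (hf : Function.Surjective f) (r : ι → ι → Prop) :
    maxBloc tokens' (fun a b => r (f a) (f b)) = maxBloc tokens r := by
  have hcomp : blocTok tokens' (fun a b => r (f a) (f b)) = blocTok tokens r ∘ f :=
    funext (blocTok_comap hfib r)
  rw [maxBloc, maxBloc, hcomp, ← sup'_image (univ_nonempty.image f)]
  exact sup'_congr _ (image_univ_of_surjective hf) fun _ _ => rfl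

theorem vbe_comap (hfib : ∀ i, ∑ a with f a = i, tokens' a = tokens i)
    (hf : Function.Surjective f) (r : ι → ι → Prop) :
    vbe tokens' (fun a b => r (f a) (f b)) = vbe tokens r := by
  rw [vbe, vbe, maxBloc_comap hfib hf, sum_eq_sum_of_fiberwise hfib]

end Pullback

theorem toc_comp {κ ι E : Type*} (ε : ℝ) (U : ι → E → ℝ) (f : κ → ι) :
    toc ε (U ∘ f) = fun a b => toc ε U (f a) (f b) :=
  rfl

theorem sumElim_const_surjective {ι σ : Type*} (p : ι) :
    Function.Surjective (Sum.elim id fun _ : σ => p) :=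
  fun i => ⟨Sum.inl i, rfl⟩

theorem sum_fiber_sumElim_const {ι σ : Type*} [Fintype ι] [Fintype σ] (p : ι)
    {tokens : ι → ℝ} {tokens' : ι ⊕ σ → ℝ}
    (hsplit : tokens' (Sum.inl p) + ∑ s, tokens' (Sum.inr s) = tokens p)
    (hother : ∀ i, i ≠ p → tokens' (Sum.inl i) = tokens i) (i : ι) :
    ∑ a with Sum.elim id (fun _ : σ => p) a = i, tokens' a = tokens i := by
  rw [sum_filter, Fintype.sum_sum_type]
  -- `show` re-elaborates the decidability instances, which still mention `Sum.elim`.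
  show (∑ j, if j = i then tokens' (.inl j) else 0) + ∑ s, (if p = i then tokens' (.inr s) else 0)
    = tokens i
  rw [Fintype.sum_ite_eq']
  by_cases hi : p = i
  · subst hi
    simpa only [if_true] using hsplit
  · simp only [hi, if_false, sum_const_zero, add_zero]
    exact hother i (Ne.symm hi)

theorem vbe_sybil_invariance_general {ι σ E : Type*} [Fintype ι] [Nonempty ι] [Fintype σ]
    (ε : ℝ) (tokens : ι → ℝ) (tokens' : ι ⊕ σ → ℝ)
    (U : ι → E → ℝ) (U' : ι ⊕ σ → E → ℝ) (p : ι)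
    (hsplit : tokens' (Sum.inl p) + ∑ s, tokens' (Sum.inr s) = tokens p)
    (hother : ∀ i, i ≠ p → tokens' (Sum.inl i) = tokens i)
    (hUold : ∀ i, U' (Sum.inl i) = U i)
    (hUnew : ∀ s, U' (Sum.inr s) = U p) :
    vbe tokens' (toc ε U') = vbe tokens (toc ε U) := by
  have hU' : U' = U ∘ Sum.elim id fun _ => p := by
    funext a
    cases a with
    | inl i => exact hUold i
    | inr s => exact hUnew s
  rw [hU', toc_comp]
  exact vbe_comap (sum_fiber_sumElim_const p hsplit hother) (sumElim_const_surjective p) _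

/-- Sybil invariance: a player p dividing her tokens among new
accounts with identical utility vectors leaves the min-entropy VBE unchanged. -/
theorem vbe_sybil_invariance {ι σ E : Type*} [Fintype ι] [Nonempty ι] [Fintype σ]
    (ε : ℝ) (tokens : ι → ℝ) (tokens' : ι ⊕ σ → ℝ)
    (htok : ∀ i, 0 < tokens i) (htok' : ∀ a, 0 ≤ tokens' a)
    (U : ι → E → ℝ) (U' : ι ⊕ σ → E → ℝ) (p : ι)
    (hsplit : tokens' (Sum.inl p) + ∑ s, tokens' (Sum.inr s) = tokens p)
    (hother : ∀ i, i ≠ p → tokens' (Sum.inl i) = tokens i)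
    (hUold : ∀ i, U' (Sum.inl i) = U i)
    (hUnew : ∀ s, U' (Sum.inr s) = U p) :
    vbe tokens' (toc ε U') = vbe tokens (toc ε U) :=
  vbe_sybil_invariance_general ε tokens tokens' U U' p hsplit hother hUold hUnew
end

section
/- Voting slates centralize: If all elections E are bundled into a smaller set of slate elections E', where a player's utility on a slate is the sum of its utilities on the underlying proposals, and players clustered together on E remain clustered on E', then the min-entropy VBE over E' is at most the VBE over E. -/
/-!
Clustering on `E` refines clustering on `E'`, since clustered players agree in sign on every
slate. So passing to slates can only merge blocs: the largest bloc share can only grow, and its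
negative logarithm can only shrink. Every player lies in its own bloc, which keeps that share
positive, where the logarithm is monotone.
-/

open Finset
open scoped Classical

section Blocs

variable {ι : Type*} [Fintype ι] {tokens : ι → ℝ} {r s : ι → ι → Prop}

theorem blocTok_mono (htok : ∀ i, 0 ≤ tokens i) (hrs : r ≤ s) (i : ι) :
    blocTok tokens r i ≤ blocTok tokens s i :=
  sum_le_sum_of_subset_of_nonneg (monotone_filter_right _ fun j _ => hrs i j) fun j _ _ => htok j

theorem blocTok_pos (htok : ∀ i, 0 < tokens i) {i : ι} (hi : r i i) : 0 < blocTok tokens r i :=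
  sum_pos (fun j _ => htok j) ⟨i, mem_filter.2 ⟨mem_univ i, hi⟩⟩

variable [Nonempty ι]

theorem maxBloc_mono (htok : ∀ i, 0 ≤ tokens i) (hrs : r ≤ s) :
    maxBloc tokens r ≤ maxBloc tokens s :=
  sup'_mono_fun fun i _ => blocTok_mono htok hrs i

theorem maxBloc_pos (htok : ∀ i, 0 < tokens i) (hr : ∀ i, r i i) : 0 < maxBloc tokens r := by
  obtain ⟨i⟩ := ‹Nonempty ι›
  exact (blocTok_pos htok (hr i)).trans_le (le_sup' _ (mem_univ i))

theorem vbe_le_vbe_of_le (htok : ∀ i, 0 < tokens i) (hr : ∀ i, r i i) (hrs : r ≤ s) :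
    vbe tokens s ≤ vbe tokens r := by
  have htotal : 0 < ∑ i, tokens i := sum_pos (fun i _ => htok i) univ_nonempty
  refine neg_le_neg (Real.logb_le_logb_of_le one_lt_two (div_pos (maxBloc_pos htok hr) htotal) ?_)
  exact div_le_div_of_nonneg_right (maxBloc_mono (fun i => (htok i).le) hrs) htotal.le

end Blocs

section Clustering

variable {ι E : Type*} {ε : ℝ} {U : ι → E → ℝ}

theorem toc_refl (i : ι) : toc ε U i i :=
  fun _ => Or.inl rfl

theorem toc_of_sign_eq {i j : ι} (h : ∀ e, Real.sign (U i e) = Real.sign (U j e)) :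
    toc ε U i j :=
  fun e => Or.inl (h e)

end Clustering

theorem vbe_slates_general {ι E : Type*} [Fintype ι] [Nonempty ι]
    (ε : ℝ) (tokens : ι → ℝ) (htok : ∀ i, 0 < tokens i)
    (U : ι → E → ℝ) (E' : Finset (Finset E))
    (halign : ∀ i j, toc ε U i j → ∀ s ∈ E',
      Real.sign (∑ e ∈ s, U i e) = Real.sign (∑ e ∈ s, U j e)) :
    vbe tokens (toc ε (fun i (s : {x // x ∈ E'}) => ∑ e ∈ s.1, U i e)) ≤
      vbe tokens (toc ε U) :=
  vbe_le_vbe_of_le htok toc_refl fun i j hij => toc_of_sign_eq fun s => halign i j hij s.1 s.2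

/-- Voting slates centralize: bundling elections E into slates E'
(utility on a slate = sum of underlying utilities), under the assumption that
players clustered on E agree in sign on every slate, can only lower the VBE. -/
theorem vbe_slates {ι E : Type*} [Fintype ι] [Nonempty ι] [Fintype E]
    (ε : ℝ) (tokens : ι → ℝ) (htok : ∀ i, 0 < tokens i)
    (U : ι → E → ℝ) (E' : Finset (Finset E))
    (halign : ∀ i j, toc ε U i j → ∀ s ∈ E',
      Real.sign (∑ e ∈ s, U i e) = Real.sign (∑ e ∈ s, U j e)) :
    vbe tokens (toc ε (fun i (s : {x // x ∈ E'}) => ∑ e ∈ s.1, U i e)) ≤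
      vbe tokens (toc ε U) :=
  vbe_slates_general ε tokens htok U E' halign
end

section
/- Pivotal-bribe cheapness: In a binary majority election with an odd number n of rational voters each with utility U > 0 for 'yes', the bribery scheme paying P+ε to a pivotal 'no' voter (where the bribe P exceeds 2U) and ε to any non-pivotal 'no' voter makes voting 'no' a weakly dominant strategy for every voter; hence if all voters are rational and offered the bribe, all vote 'no', no voter is pivotal, and the briber's total cost is n·ε, which tends to 0 as ε → 0. -/
/-!
Let `w` be a profile in which voter `i` votes 'no' and `t` the same profile with `i` switched to
'yes'; `t` has one more 'yes' vote than `w`. For `n = 2m + 1`, 'yes' wins at `t` but not at `w`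
exactly when `w` has `m + 1` 'no' votes, i.e. when `i` is pivotal at `w`. In that case voting
'no' costs `i` the amount `2U` in the election and earns `P + ε ≥ 2U`; otherwise the outcome does
not depend on `i` and voting 'no' earns `ε`. When everybody votes 'no' there are
`n > (n + 1) / 2` 'no' votes, so nobody is pivotal and each voter receives `ε`.
-/

open Finset Function

section Majority

variable {ι : Type*} [Fintype ι] {n : ℕ}

lemma card_filter_eq_true_add_card_filter_eq_false (v : ι → Bool) :
    #{j | v j = true} + #{j | v j = false} = Fintype.card ι := by
  simpa using card_filter_add_card_filter_not (s := univ) (fun j => v j = true)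

lemma card_filter_update_true_eq_add_one [DecidableEq ι] {w : ι → Bool} {i : ι}
    (hi : w i = false) :
    #{j | update w i true j = true} = #{j | w j = true} + 1 := by
  have hset : univ.filter (fun j => update w i true j = true) =
      insert i (univ.filter fun j => w j = true) := by
    ext j
    by_cases h : j = i <;> simp [update_apply, h, hi]
  rw [hset, card_insert_of_notMem (by simp [hi])]

lemma lt_two_mul_card_update_true_iff [DecidableEq ι] (hcard : Fintype.card ι = n) (hodd : Odd n)
    {w : ι → Bool} {i : ι} (hi : w i = false) :
    n < 2 * #{j | update w i true j = true} ↔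
      n < 2 * #{j | w j = true} ∨ #{j | w j = false} = (n + 1) / 2 := by
  obtain ⟨m, hm⟩ := hodd
  have := card_filter_eq_true_add_card_filter_eq_false w
  rw [card_filter_update_true_eq_add_one hi]
  omega

lemma not_lt_two_mul_card_of_card_eq (hcard : Fintype.card ι = n) (hodd : Odd n)
    {w : ι → Bool} (hw : #{j | w j = false} = (n + 1) / 2) :
    ¬ n < 2 * #{j | w j = true} := by
  obtain ⟨m, hm⟩ := hodd
  have := card_filter_eq_true_add_card_filter_eq_false w
  omega

end Majority

theorem pivotal_bribe_general (n : ℕ) (hodd : Odd n) (hn : 1 < n)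
    (U P ε : ℝ) (hε : 0 < ε) (hP : 2 * U ≤ P) :
    let yesCount : (Fin n → Bool) → ℕ :=
      fun v => (Finset.univ.filter (fun i => v i = true)).card
    let noCount : (Fin n → Bool) → ℕ :=
      fun v => (Finset.univ.filter (fun i => v i = false)).card
    let yesWins : (Fin n → Bool) → Prop := fun v => n < 2 * yesCount v
    let pivotal : (Fin n → Bool) → Prop := fun v => noCount v = (n + 1) / 2
    let bribe : Fin n → (Fin n → Bool) → ℝ := fun i v =>
      if v i = false then (if pivotal v then P + ε else ε) else 0
    let payoff : Fin n → (Fin n → Bool) → ℝ := fun i v =>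
      (if yesWins v then U else -U) + bribe i v
    (∀ (v : Fin n → Bool) (i : Fin n),
        payoff i (Function.update v i true) ≤ payoff i (Function.update v i false)) ∧
    ¬ pivotal (fun _ => false) ∧
    (∑ i : Fin n, bribe i (fun _ => false)) = n * ε ∧
    Filter.Tendsto (fun e : ℝ => (n : ℝ) * e) (nhds 0) (nhds 0) := by
  intro yesCount noCount yesWins pivotal bribe payoff
  have not_pivotal : ¬ pivotal (fun _ => false) := by
    simp only [pivotal, noCount, filter_true, card_univ, Fintype.card_fin]
    omega
  refine ⟨fun v i => ?_, not_pivotal, ?_, ?_⟩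
  · rw [← update_idem false true v]
    set w := update v i false
    have hi : w i = false := update_self i false v
    have hswitch : yesWins (update w i true) ↔ yesWins w ∨ pivotal w :=
      lt_two_mul_card_update_true_iff (Fintype.card_fin n) hodd hi
    by_cases hp : pivotal w
    · have hlose : ¬ yesWins w := not_lt_two_mul_card_of_card_eq (Fintype.card_fin n) hodd hp
      simp only [payoff, bribe, update_self, hi, hswitch.2 (Or.inr hp), hlose, hp,
        Bool.true_eq_false, if_true, if_false]
      linarith
    · have hsame : yesWins (update w i true) ↔ yesWins w := by
        simpa [hp] using hswitch
      simp only [payoff, bribe, update_self, hi, hp, hsame, Bool.true_eq_false,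
        if_true, if_false]
      linarith
  · simp [bribe, not_pivotal]
  · simpa using (Filter.tendsto_id (x := nhds (0 : ℝ))).const_mul (n : ℝ)

/-- Pivotal-bribe cheapness: in a binary majority election with
an odd number n > 1 of voters, each with utility U > 0 for 'yes', the scheme
paying P+ε (P ≥ 2U) to a pivotal 'no' voter and ε to any other 'no' voter makes
voting 'no' weakly dominant; if everyone votes 'no' nobody is pivotal, the total
cost is n·ε, and it tends to 0 as ε → 0. -/
theorem pivotal_bribe (n : ℕ) (hodd : Odd n) (hn : 1 < n)
    (U P ε : ℝ) (hU : 0 < U) (hε : 0 < ε) (hP : 2 * U ≤ P) :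
    let yesCount : (Fin n → Bool) → ℕ :=
      fun v => (Finset.univ.filter (fun i => v i = true)).card
    let noCount : (Fin n → Bool) → ℕ :=
      fun v => (Finset.univ.filter (fun i => v i = false)).card
    let yesWins : (Fin n → Bool) → Prop := fun v => n < 2 * yesCount v
    let pivotal : (Fin n → Bool) → Prop := fun v => noCount v = (n + 1) / 2
    let bribe : Fin n → (Fin n → Bool) → ℝ := fun i v =>
      if v i = false then (if pivotal v then P + ε else ε) else 0
    let payoff : Fin n → (Fin n → Bool) → ℝ := fun i v =>
      (if yesWins v then U else -U) + bribe i v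
    (∀ (v : Fin n → Bool) (i : Fin n),
        payoff i (Function.update v i true) ≤ payoff i (Function.update v i false)) ∧
    ¬ pivotal (fun _ => false) ∧
    (∑ i : Fin n, bribe i (fun _ => false)) = n * ε ∧
    Filter.Tendsto (fun e : ℝ => (n : ℝ) * e) (nhds 0) (nhds 0) :=
  pivotal_bribe_general n hodd hn U P ε hε hP
end
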